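/- Let p ≥ 1 be an integer, M_p > 0, c > 0, let q be a real with 2 ≤ q ≤ p+1 and σ_q > 0. Let f : ℝ^n → ℝ be differentiable and uniformly convex of degree q with parameter σ_q, with global minimizer x*, let z ∈ ℝ^n and Δ > 0 satisfy f(z) − f(x*) ≤ Δ, and let N be a positive integer with N ≥ (2 c M_p q^{(p+1)/q} σ_q^{−(p+1)/q} Δ^{(p+1−q)/q})^{2/(3p+1)}. If y ∈ ℝ^n satisfies f(y) − f(x*) ≤ c M_p ∥z − x*∥^{p+1} / N^{(3p+1)/2}, then f(y) − f(x*) ≤ Δ/2. -/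

import Mathlib

open scoped RealInnerProductSpace

/-- `f` is uniformly convex of degree `q` with parameter `σ`:
`f(y) ≥ f(x) + ⟨∇f(x), y - x⟩ + (σ/q)‖y - x‖^q` for all `x, y`. -/
def UniformlyConvexDeg {n : ℕ} (q σ : ℝ) (f : EuclideanSpace ℝ (Fin n) → ℝ) : Prop :=
  ∀ x y : EuclideanSpace ℝ (Fin n),
    f y ≥ f x + ⟪gradient f x, y - x⟫ + (σ / q) * ‖y - x‖ ^ q

/-!
At the minimizer the gradient vanishes, so uniform convexity gives
`(σ_q/q)‖z - x*‖^q ≤ f(z) - f(x*) ≤ Δ`, i.e. `‖z - x*‖^{p+1} ≤ (qΔ/σ_q)^{(p+1)/q}`.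
The lower bound on `N` says exactly that `N^{(3p+1)/2}` is at least
`2 c M_p (q/σ_q)^{(p+1)/q} Δ^{(p+1)/q - 1}`, and dividing the two bounds leaves `Δ/2`.
-/

theorem UniformlyConvexDeg.div_mul_rpow_le_sub_of_isLocalMin {n : ℕ} {q σ : ℝ}
    {f : EuclideanSpace ℝ (Fin n) → ℝ} (hf : UniformlyConvexDeg q σ f)
    {x : EuclideanSpace ℝ (Fin n)} (hx : IsLocalMin f x) (y : EuclideanSpace ℝ (Fin n)) :
    σ / q * ‖y - x‖ ^ q ≤ f y - f x := by
  have hgrad : gradient f x = 0 := by simp [gradient, hx.fderiv_eq_zero]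
  have := hf x y
  rw [hgrad, inner_zero_left] at this
  linarith

namespace Real

theorem rpow_le_rpow_div_of_rpow_le {r q B a : ℝ} (hr : 0 ≤ r) (hq : 0 < q) (ha : 0 ≤ a)
    (h : r ^ q ≤ B) : r ^ a ≤ B ^ (a / q) := by
  calc r ^ a = (r ^ q) ^ (a / q) := by rw [← rpow_mul hr, mul_div_cancel₀ _ hq.ne']
    _ ≤ B ^ (a / q) := rpow_le_rpow (rpow_nonneg hr q) h (div_nonneg ha hq.le)

theorem le_rpow_of_rpow_div_le {A N s : ℝ} (hA : 0 ≤ A) (hN : 0 ≤ N) (hs : 0 < s)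
    (h : A ^ (2 / s) ≤ N) : A ≤ N ^ (s / 2) := by
  rwa [← inv_div, rpow_inv_le_iff_of_pos hA hN (by positivity)] at h

theorem mul_div_rpow_div_div_eq {K q σ Δ a : ℝ} (hK : K ≠ 0) (hq : 0 < q) (hσ : 0 < σ)
    (hΔ : 0 < Δ) :
    K * (q * Δ / σ) ^ (a / q) / (2 * K * q ^ (a / q) * σ ^ (-(a / q)) * Δ ^ ((a - q) / q))
      = Δ / 2 := by
  have hΔsplit : Δ ^ (a / q) = Δ ^ ((a - q) / q) * Δ := by
    rw [sub_div, div_self hq.ne', rpow_sub_one hΔ.ne', div_mul_cancel₀ _ (by positivity)]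
  have : σ ^ (a / q) ≠ 0 := by positivity
  rw [div_rpow (by positivity) hσ.le, mul_rpow hq.le hΔ.le, hΔsplit, rpow_neg hσ.le]
  field_simp

end Real

theorem restart_halving_step {n : ℕ} (p : ℕ) (Mp c : ℝ)
    (hMp : 0 < Mp) (hc : 0 < c)
    (q σq : ℝ) (hq2 : 2 ≤ q) (hσ : 0 < σq)
    (f : EuclideanSpace ℝ (Fin n) → ℝ)
    (hucon : UniformlyConvexDeg q σq f)
    (xstar : EuclideanSpace ℝ (Fin n)) (hmin : ∀ w, f xstar ≤ f w)
    (z : EuclideanSpace ℝ (Fin n)) (Δ : ℝ) (hΔ : 0 < Δ) (hz : f z - f xstar ≤ Δ)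
    (N : ℕ)
    (hN : (N : ℝ) ≥ (2 * c * Mp * q ^ (((p : ℝ) + 1) / q) * σq ^ (-(((p : ℝ) + 1) / q))
        * Δ ^ (((p : ℝ) + 1 - q) / q)) ^ (2 / (3 * (p : ℝ) + 1)))
    (y : EuclideanSpace ℝ (Fin n))
    (hy : f y - f xstar ≤ c * Mp * ‖z - xstar‖ ^ (p + 1) / (N : ℝ) ^ ((3 * (p : ℝ) + 1) / 2)) :
    f y - f xstar ≤ Δ / 2 := by
  have hq : 0 < q := by linarith
  have hgrowth := hucon.div_mul_rpow_le_sub_of_isLocalMin (Filter.Eventually.of_forall hmin) z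
  have hdist : ‖z - xstar‖ ^ (p + 1) ≤ (q * Δ / σq) ^ (((p : ℝ) + 1) / q) := by
    have hrq : ‖z - xstar‖ ^ q ≤ q * Δ / σq := by
      rw [div_mul_eq_mul_div, div_le_iff₀ hq] at hgrowth
      rw [le_div_iff₀ hσ]
      nlinarith
    exact_mod_cast Real.rpow_le_rpow_div_of_rpow_le (a := (p : ℝ) + 1) (norm_nonneg _) hq
      (by positivity) hrq
  set A := 2 * c * Mp * q ^ (((p : ℝ) + 1) / q) * σq ^ (-(((p : ℝ) + 1) / q))
    * Δ ^ (((p : ℝ) + 1 - q) / q)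
  have hA : 0 < A := by positivity
  have hNA : A ≤ (N : ℝ) ^ ((3 * (p : ℝ) + 1) / 2) :=
    Real.le_rpow_of_rpow_div_le hA.le N.cast_nonneg (by positivity) hN
  calc f y - f xstar ≤ c * Mp * ‖z - xstar‖ ^ (p + 1) / (N : ℝ) ^ ((3 * (p : ℝ) + 1) / 2) := hy
    _ ≤ c * Mp * (q * Δ / σq) ^ (((p : ℝ) + 1) / q) / A := by gcongr
    _ = Δ / 2 := by
      simp only [A, mul_assoc 2 c Mp]
      exact Real.mul_div_rpow_div_div_eq (by positivity) hq hσ hΔ
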